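/- arXiv:1212.1730 — 5 statements merged into one kernel-verified Lean document; each statement's English description precedes it below -/
import Mathlib

section
/- Let H be a finite-dimensional complex inner product space, σ₁ an invertible Hermitian p×p matrix, A : H → H a linear operator, X : H → H an invertible self-adjoint operator, and B : ℂᵖ → H a linear map satisfying the Lyapunov equation A X + X A* + B σ₁ B* = 0. Define S(λ) = I − B* X⁻¹ (λI − A)⁻¹ B σ₁ for λ not in the spectrum of A. Then for every λ not in the spectrum of A with −λ̄ also not in the spectrum of A, the symmetry relation S(−λ̄)* σ₁ S(λ) = σ₁ holds. -/
/-! The Lyapunov equation says `X⁻¹ B σ₁ Bᴴ X⁻¹ = X⁻¹ (λ - A) + (-λ - Aᴴ) X⁻¹`. Sandwiched between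
the resolvents `(-λ - Aᴴ)⁻¹ = ((-λ̄ - A)⁻¹)ᴴ` and `(λ - A)⁻¹`, this turns the quadratic term of
`S(-λ̄)ᴴ σ₁ S(λ)` into the sum of its two linear terms, which then cancel. -/

open Matrix

namespace Matrix

variable {m n K : Type*} [Fintype m] [Fintype n]

lemma isUnit_smul_one_sub_of_notMem_spectrum [DecidableEq n] [CommRing K] {A : Matrix n n K} {l : K}
    (hl : l ∉ spectrum K A) : IsUnit (l • (1 : Matrix n n K) - A) := by
  rwa [spectrum.notMem_iff, Algebra.algebraMap_eq_smul_one] at hl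

lemma inv_mul_mul_inv_of_sylvester [DecidableEq n] [CommRing K] {A C X : Matrix n n K}
    (hX : IsUnit X) (l : K) :
    X⁻¹ * -(A * X + X * C) * X⁻¹ = X⁻¹ * (l • 1 - A) + (-l • 1 - C) * X⁻¹ := by
  have hX' := (isUnit_iff_isUnit_det X).mp hX
  calc X⁻¹ * -(A * X + X * C) * X⁻¹
      = -(X⁻¹ * A * (X * X⁻¹) + X⁻¹ * X * (C * X⁻¹)) := by noncomm_ring
    _ = X⁻¹ * (l • 1 - A) + (-l • 1 - C) * X⁻¹ := by
      rw [mul_nonsing_inv X hX', nonsing_inv_mul X hX', Matrix.mul_sub, Matrix.sub_mul,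
        mul_smul_comm, smul_mul_assoc, neg_smul]
      noncomm_ring

lemma resolvent_mul_mul_resolvent_of_sylvester [DecidableEq n] [CommRing K]
    {A C X M : Matrix n n K} (hX : IsUnit X) (hM : M = -(A * X + X * C)) {l : K}
    (hA : IsUnit (l • 1 - A)) (hC : IsUnit (-l • 1 - C)) :
    (-l • 1 - C)⁻¹ * (X⁻¹ * M * X⁻¹) * (l • 1 - A)⁻¹
      = (-l • 1 - C)⁻¹ * X⁻¹ + X⁻¹ * (l • 1 - A)⁻¹ := by
  have hR := mul_nonsing_inv _ ((isUnit_iff_isUnit_det _).mp hA)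
  have hQ := nonsing_inv_mul _ ((isUnit_iff_isUnit_det _).mp hC)
  rw [hM, inv_mul_mul_inv_of_sylvester hX l]
  calc (-l • 1 - C)⁻¹ * (X⁻¹ * (l • 1 - A) + (-l • 1 - C) * X⁻¹) * (l • 1 - A)⁻¹
      = (-l • 1 - C)⁻¹ * X⁻¹ * ((l • 1 - A) * (l • 1 - A)⁻¹)
        + (-l • 1 - C)⁻¹ * (-l • 1 - C) * (X⁻¹ * (l • 1 - A)⁻¹) := by noncomm_ring
    _ = _ := by rw [hR, hQ]; noncomm_ring

lemma one_sub_mul_mul_one_sub_of_sandwich [DecidableEq m] [Ring K] {F : Matrix m n K}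
    {G : Matrix n m K} {s : Matrix m m K} {Q R Y : Matrix n n K}
    (h : Q * (Y * (G * s * F) * Y) * R = Q * Y + Y * R) :
    (1 - s * F * Q * Y * G) * s * (1 - F * Y * R * G * s) = s := by
  have h' := congrArg (fun M => s * F * M * G * s) h
  simp only [Matrix.mul_assoc, Matrix.mul_add, Matrix.add_mul] at h'
  simp only [Matrix.sub_mul, Matrix.mul_sub, one_mul, mul_one, Matrix.mul_assoc, h']
  abel

lemma conjTranspose_one_sub_mul_inv [DecidableEq m] [DecidableEq n] [CommRing K] [StarRing K]
    {B : Matrix n m K} {s : Matrix m m K} {X A : Matrix n n K} (hs : s.IsHermitian)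
    (hX : X.IsHermitian) (l : K) :
    (1 - Bᴴ * X⁻¹ * (l • 1 - A)⁻¹ * B * s)ᴴ
      = 1 - s * Bᴴ * (star l • 1 - Aᴴ)⁻¹ * X⁻¹ * B := by
  simp only [conjTranspose_sub, conjTranspose_mul, conjTranspose_one, conjTranspose_smul,
    conjTranspose_conjTranspose, conjTranspose_nonsing_inv, hX.eq, hs.eq, Matrix.mul_assoc]

end Matrix

theorem stmt0_general {n p : ℕ}
    (σ₁ : Matrix (Fin p) (Fin p) ℂ) (A X : Matrix (Fin n) (Fin n) ℂ)
    (B : Matrix (Fin n) (Fin p) ℂ)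
    (hσ₁ : σ₁.IsHermitian)
    (hX : X.IsHermitian) (hXinv : IsUnit X)
    (hLyap : A * X + X * Aᴴ + B * σ₁ * Bᴴ = 0)
    (S : ℂ → Matrix (Fin p) (Fin p) ℂ)
    (hS : ∀ l : ℂ, S l = 1 - Bᴴ * X⁻¹ * (l • 1 - A)⁻¹ * B * σ₁) :
    ∀ l : ℂ, l ∉ spectrum ℂ A → -(starRingEnd ℂ l) ∉ spectrum ℂ A →
      (S (-(starRingEnd ℂ l)))ᴴ * σ₁ * S l = σ₁ := by
  intro l hl hl'
  have hAdj : IsUnit (-l • 1 - Aᴴ) := by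
    simpa [conjTranspose_sub, conjTranspose_smul] using
      (isUnit_conjTranspose _).mpr (isUnit_smul_one_sub_of_notMem_spectrum hl')
  have hBσB : B * σ₁ * Bᴴ = -(A * X + X * Aᴴ) := eq_neg_of_add_eq_zero_right hLyap
  rw [hS, hS, conjTranspose_one_sub_mul_inv hσ₁ hX, star_neg, starRingEnd_apply, star_star]
  exact one_sub_mul_mul_one_sub_of_sandwich
    (resolvent_mul_mul_resolvent_of_sylvester hXinv hBσB
      (isUnit_smul_one_sub_of_notMem_spectrum hl) hAdj)

/-- Symmetry of the transfer function: if the Lyapunov equation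
`A X + X Aᴴ + B σ₁ Bᴴ = 0` holds, then `S(-λ̄)ᴴ σ₁ S(λ) = σ₁`. -/
theorem stmt0 {n p : ℕ}
    (σ₁ : Matrix (Fin p) (Fin p) ℂ) (A X : Matrix (Fin n) (Fin n) ℂ)
    (B : Matrix (Fin n) (Fin p) ℂ)
    (hσ₁ : σ₁.IsHermitian) (hσ₁inv : IsUnit σ₁)
    (hX : X.IsHermitian) (hXinv : IsUnit X)
    (hLyap : A * X + X * Aᴴ + B * σ₁ * Bᴴ = 0)
    (S : ℂ → Matrix (Fin p) (Fin p) ℂ)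
    (hS : ∀ l : ℂ, S l = 1 - Bᴴ * X⁻¹ * (l • 1 - A)⁻¹ * B * σ₁) :
    ∀ l : ℂ, l ∉ spectrum ℂ A → -(starRingEnd ℂ l) ∉ spectrum ℂ A →
      (S (-(starRingEnd ℂ l)))ᴴ * σ₁ * S l = σ₁ :=
  stmt0_general σ₁ A X B hσ₁ hX hXinv hLyap S hS
end

section
/- Permanence of the Lyapunov equation: let H be a finite-dimensional complex Hilbert space, σ₁, σ₂ Hermitian p×p matrices with σ₁ invertible, γ a skew-Hermitian p×p matrix (γ + γ* = 0), A : H → H linear, and let B : ℝ → (ℂᵖ → H) and X : ℝ → (H → H) be differentiable functions satisfying d/dx (B(x) σ₁) = −A B(x) σ₂ − B(x) γ and d/dx X(x) = B(x) σ₂ B(x)*. If the Lyapunov equation A X(x₀) + X(x₀) A* + B(x₀) σ₁ B(x₀)* = 0 holds at some point x₀, then it holds for all x ∈ ℝ. -/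
/-!
The residual `L = A X + X A* + B σ₁ B*` has zero derivative along the flow. Since `σ₁` is
invertible, the vessel equation gives `B' = (-A B σ₂ - B γ) σ₁⁻¹`, and as `σ₁`, `σ₂` are Hermitian
and `γ* = -γ`, the term `B σ₁ (B')*` equals `-B σ₂ B* A* + B γ B*`. Hence the derivative of
`B σ₁ B*` is `-A B σ₂ B* - B σ₂ B* A*`, cancelling that of `A X + X A*`. So `L` is constant and
vanishes because `L(x₀) = 0`.
-/
open Matrix

attribute [local instance] Matrix.normedAddCommGroup Matrix.normedSpace

section Calculus

variable {𝕜 : Type*} [NontriviallyNormedField 𝕜] {x : 𝕜} {l m n : Type*}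

theorem Matrix.hasDerivAt_iff {F : Type*} [NormedAddCommGroup F] [NormedSpace 𝕜 F] [Fintype n]
    {f : 𝕜 → Matrix m n F} {f' : Matrix m n F} :
    HasDerivAt f f' x ↔ ∀ i j, HasDerivAt (fun y => f y i j) (f' i j) x :=
  hasDerivAt_pi.trans (forall_congr' fun _ => hasDerivAt_pi)

theorem HasDerivAt.matrix_mul {𝔸 : Type*} [NormedCommRing 𝔸] [NormedAlgebra 𝕜 𝔸]
    [Fintype m] [Fintype n] {f : 𝕜 → Matrix l m 𝔸} {g : 𝕜 → Matrix m n 𝔸}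
    {f' : Matrix l m 𝔸} {g' : Matrix m n 𝔸} (hf : HasDerivAt f f' x) (hg : HasDerivAt g g' x) :
    HasDerivAt (fun y => f y * g y) (f' * g x + f x * g') x := by
  rw [Matrix.hasDerivAt_iff] at hf hg ⊢
  intro i k
  simp only [Matrix.mul_apply, Matrix.add_apply, ← Finset.sum_add_distrib]
  exact HasDerivAt.fun_sum fun j _ => (hf i j).mul (hg j k)

theorem HasDerivAt.matrix_conjTranspose [StarRing 𝕜] [TrivialStar 𝕜] {F : Type*}
    [NormedAddCommGroup F] [NormedSpace 𝕜 F] [StarAddMonoid F] [ContinuousStar F]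
    [StarModule 𝕜 F] [Fintype m] [Fintype n] {f : 𝕜 → Matrix m n F} {f' : Matrix m n F}
    (hf : HasDerivAt f f' x) : HasDerivAt (fun y => (f y)ᴴ) f'ᴴ x :=
  Matrix.hasDerivAt_iff.2 fun j i => (Matrix.hasDerivAt_iff.1 hf i j).star

theorem HasDerivAt.of_mul_right_of_isUnit {𝔸 : Type*} [NormedCommRing 𝔸] [NormedAlgebra 𝕜 𝔸]
    [Fintype m] [DecidableEq m] {f : 𝕜 → Matrix l m 𝔸} {S : Matrix m m 𝔸} {D : Matrix l m 𝔸}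
    (hS : IsUnit S) (hf : HasDerivAt (fun y => f y * S) D x) : HasDerivAt f (D * S⁻¹) x := by
  have hdet : IsUnit S.det := (isUnit_iff_isUnit_det S).mp hS
  simpa [mul_nonsing_inv_cancel_right _ _ hdet] using hf.matrix_mul (hasDerivAt_const x S⁻¹)

end Calculus

section Vessel

variable {n p : ℕ} {σ₁ σ₂ γ : Matrix (Fin p) (Fin p) ℂ} {A : Matrix (Fin n) (Fin n) ℂ}
  {B : ℝ → Matrix (Fin n) (Fin p) ℂ} {X : ℝ → Matrix (Fin n) (Fin n) ℂ}

theorem hasDerivAt_lyapunov (hσ₁ : σ₁.IsHermitian) (hσ₁inv : IsUnit σ₁)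
    (hσ₂ : σ₂.IsHermitian) (hγ : γᴴ = -γ)
    (hB : ∀ x : ℝ, HasDerivAt (fun y => B y * σ₁) (-(A * B x * σ₂) - B x * γ) x)
    (hX : ∀ x : ℝ, HasDerivAt X (B x * σ₂ * (B x)ᴴ) x) (x : ℝ) :
    HasDerivAt (fun y => A * X y + X y * Aᴴ + B y * σ₁ * (B y)ᴴ) 0 x := by
  set D := -(A * B x * σ₂) - B x * γ
  have hBσ₁ : B x * σ₁ * (D * σ₁⁻¹)ᴴ = B x * Dᴴ := by
    rw [conjTranspose_mul, hσ₁.inv.eq, ← Matrix.mul_assoc,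
      mul_nonsing_inv_cancel_right _ _ ((isUnit_iff_isUnit_det σ₁).mp hσ₁inv)]
  have hBder : HasDerivAt (fun y => (B y)ᴴ) (D * σ₁⁻¹)ᴴ x :=
    ((hB x).of_mul_right_of_isUnit hσ₁inv).matrix_conjTranspose
  refine ((((hasDerivAt_const x A).matrix_mul (hX x)).add
    ((hX x).matrix_mul (hasDerivAt_const x Aᴴ))).add ((hB x).matrix_mul hBder)).congr_deriv ?_
  rw [hBσ₁]
  simp only [D, conjTranspose_sub, conjTranspose_neg, conjTranspose_mul, hσ₂.eq, hγ,
    Matrix.zero_mul, Matrix.mul_zero, Matrix.sub_mul, Matrix.neg_mul, Matrix.mul_sub,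
    Matrix.mul_neg, Matrix.mul_assoc]
  abel

end Vessel

/-- Permanence of the Lyapunov equation along the vessel flow. -/
theorem stmt1 {n p : ℕ}
    (σ₁ σ₂ γ : Matrix (Fin p) (Fin p) ℂ)
    (hσ₁ : σ₁.IsHermitian) (hσ₁inv : IsUnit σ₁) (hσ₂ : σ₂.IsHermitian)
    (hγ : γᴴ = -γ)
    (A : Matrix (Fin n) (Fin n) ℂ)
    (B : ℝ → Matrix (Fin n) (Fin p) ℂ) (X : ℝ → Matrix (Fin n) (Fin n) ℂ)
    (hB : ∀ x : ℝ, HasDerivAt (fun y => B y * σ₁) (-(A * B x * σ₂) - B x * γ) x)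
    (hX : ∀ x : ℝ, HasDerivAt X (B x * σ₂ * (B x)ᴴ) x)
    (x₀ : ℝ)
    (h0 : A * X x₀ + X x₀ * Aᴴ + B x₀ * σ₁ * (B x₀)ᴴ = 0) :
    ∀ x : ℝ, A * X x + X x * Aᴴ + B x * σ₁ * (B x)ᴴ = 0 := by
  have hL := hasDerivAt_lyapunov hσ₁ hσ₁inv hσ₂ hγ hB hX
  intro x
  exact (is_const_of_deriv_eq_zero (fun y => (hL y).differentiableAt) (fun y => (hL y).deriv)
    x x₀).trans h0
end

section
/- Derivative of X⁻¹B: assume the vessel equations d/dx(B σ₁) = −A B σ₂ − B γ, dX/dx = B σ₂ B*, the Lyapunov equation A X + X A* + B σ₁ B* = 0 for all x, X(x) invertible, and define γ*(x) = γ + σ₂ B(x)* X(x)⁻¹ B(x) σ₁ − σ₁ B(x)* X(x)⁻¹ B(x) σ₂. Then d/dx [X(x)⁻¹ B(x) σ₁] = A* X(x)⁻¹ B(x) σ₂ − X(x)⁻¹ B(x) γ*(x). -/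
/-!
Differentiate `X⁻¹ · (B σ₁)` by the product rule, using `(X⁻¹)' = -X⁻¹ X' X⁻¹` and the vessel
equations for `X'` and `(B σ₁)'`. The term `-X⁻¹ A B σ₂` that this produces is rewritten through
the Lyapunov equation conjugated by `X⁻¹`, namely `A* X⁻¹ = -X⁻¹ A - X⁻¹ B σ₁ B* X⁻¹`, and the
quadratic terms in `B` that are left over are exactly those collected in `γ*`.
-/

open Matrix

attribute [local instance] Matrix.normedAddCommGroup Matrix.normedSpace

theorem HasDerivAt.matrix_mul_s3 {𝕜 R l m o : Type*} [NontriviallyNormedField 𝕜] [NormedRing R]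
    [NormedAlgebra 𝕜 R] [Fintype l] [Fintype m] [Fintype o]
    {M : 𝕜 → Matrix l m R} {N : 𝕜 → Matrix m o R} {M' : Matrix l m R} {N' : Matrix m o R}
    {x : 𝕜} (hM : HasDerivAt M M' x) (hN : HasDerivAt N N' x) :
    HasDerivAt (fun y => M y * N y) (M' * N x + M x * N') x := by
  refine hasDerivAt_pi.2 fun i => hasDerivAt_pi.2 fun j => ?_
  simp only [mul_apply, Matrix.add_apply, ← Finset.sum_add_distrib]
  exact HasDerivAt.fun_sum fun k _ =>
    (hasDerivAt_pi.1 (hasDerivAt_pi.1 hM i) k).mul (hasDerivAt_pi.1 (hasDerivAt_pi.1 hN k) j)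

/- `HasDerivAt` only sees the topology, and the `L∞` operator norm, which makes square matrices a
normed algebra, induces the entrywise topology definitionally; the derivative of `Ring.inverse`
therefore transfers. Instance search does not find completeness for that uniformity by itself. -/
theorem HasDerivAt.matrix_inv {𝕜 R n : Type*} [NontriviallyNormedField 𝕜] [NormedCommRing R]
    [NormedAlgebra 𝕜 R] [CompleteSpace R] [Fintype n] [DecidableEq n]
    {M : 𝕜 → Matrix n n R} {M' : Matrix n n R} {x : 𝕜}
    (hM : HasDerivAt M M' x) (hx : IsUnit (M x)) :
    HasDerivAt (fun y => (M y)⁻¹) (-((M x)⁻¹ * M' * (M x)⁻¹)) x := by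
  let _ : NormedRing (Matrix n n R) := Matrix.linftyOpNormedRing
  let _ : NormedAlgebra 𝕜 (Matrix n n R) := Matrix.linftyOpNormedAlgebra
  have _ : @CompleteSpace (Matrix n n R) Matrix.linftyOpNormedRing.toUniformSpace :=
    (inferInstance : CompleteSpace (Matrix n n R))
  obtain ⟨u, hu⟩ := hx
  have h := (hasFDerivAt_ringInverse (𝕜 := 𝕜) u).comp_hasDerivAt_of_eq x hM hu
  simp only [nonsing_inv_eq_ringInverse, ← hu, Ring.inverse_unit]
  simp only [Function.comp_def] at h
  exact h

theorem Matrix.mul_inv_eq_of_lyapunov {n R : Type*} [Fintype n] [DecidableEq n] [CommRing R]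
    {A K C X : Matrix n n R} (h : A * X + X * K + C = 0) (hX : IsUnit X) :
    K * X⁻¹ = -(X⁻¹ * A) - X⁻¹ * C * X⁻¹ := by
  have hdet : IsUnit X.det := (isUnit_iff_isUnit_det X).mp hX
  have hconj : X⁻¹ * (A * X + X * K + C) * X⁻¹ = X⁻¹ * A + K * X⁻¹ + X⁻¹ * C * X⁻¹ := by
    simp only [Matrix.mul_add, Matrix.add_mul, ← Matrix.mul_assoc, nonsing_inv_mul _ hdet,
      Matrix.one_mul]
    simp only [Matrix.mul_assoc, mul_nonsing_inv _ hdet, Matrix.mul_one]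
  rw [h, Matrix.mul_zero, Matrix.zero_mul] at hconj
  calc K * X⁻¹ = (X⁻¹ * A + K * X⁻¹ + X⁻¹ * C * X⁻¹) - X⁻¹ * A - X⁻¹ * C * X⁻¹ := by abel
    _ = _ := by rw [← hconj]; abel

theorem stmt3_general {n p : ℕ}
    (σ₁ σ₂ γ : Matrix (Fin p) (Fin p) ℂ)
    (A : Matrix (Fin n) (Fin n) ℂ)
    (B : ℝ → Matrix (Fin n) (Fin p) ℂ) (X : ℝ → Matrix (Fin n) (Fin n) ℂ)
    (hB : ∀ x : ℝ, HasDerivAt (fun y => B y * σ₁) (-(A * B x * σ₂) - B x * γ) x)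
    (hX : ∀ x : ℝ, HasDerivAt X (B x * σ₂ * (B x)ᴴ) x)
    (hLyap : ∀ x : ℝ, A * X x + X x * Aᴴ + B x * σ₁ * (B x)ᴴ = 0)
    (hXinv : ∀ x : ℝ, IsUnit (X x))
    (γs : ℝ → Matrix (Fin p) (Fin p) ℂ)
    (hγs : ∀ x : ℝ, γs x = γ + σ₂ * (B x)ᴴ * (X x)⁻¹ * B x * σ₁
        - σ₁ * (B x)ᴴ * (X x)⁻¹ * B x * σ₂) :
    ∀ x : ℝ, HasDerivAt (fun y => (X y)⁻¹ * B y * σ₁)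
      (Aᴴ * (X x)⁻¹ * B x * σ₂ - (X x)⁻¹ * B x * γs x) x := by
  intro x
  have hderiv := ((hX x).matrix_inv (hXinv x)).matrix_mul_s3 (hB x)
  have hAstar := mul_inv_eq_of_lyapunov (hLyap x) (hXinv x)
  convert hderiv using 1
  · simp only [Matrix.mul_assoc]
  · rw [hγs x, hAstar]
    simp only [Matrix.sub_mul, Matrix.mul_sub, Matrix.mul_add, Matrix.neg_mul,
      Matrix.mul_neg, Matrix.mul_assoc]
    abel

/-- Derivative of `X⁻¹ B σ₁` for a vessel:
`d/dx [X⁻¹ B σ₁] = Aᴴ X⁻¹ B σ₂ − X⁻¹ B γ*`. -/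
theorem stmt3 {n p : ℕ}
    (σ₁ σ₂ γ : Matrix (Fin p) (Fin p) ℂ)
    (hσ₁ : σ₁.IsHermitian) (hσ₁inv : IsUnit σ₁) (hσ₂ : σ₂.IsHermitian)
    (hγ : γᴴ = -γ)
    (A : Matrix (Fin n) (Fin n) ℂ)
    (B : ℝ → Matrix (Fin n) (Fin p) ℂ) (X : ℝ → Matrix (Fin n) (Fin n) ℂ)
    (hB : ∀ x : ℝ, HasDerivAt (fun y => B y * σ₁) (-(A * B x * σ₂) - B x * γ) x)
    (hX : ∀ x : ℝ, HasDerivAt X (B x * σ₂ * (B x)ᴴ) x)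
    (hLyap : ∀ x : ℝ, A * X x + X x * Aᴴ + B x * σ₁ * (B x)ᴴ = 0)
    (hXh : ∀ x : ℝ, (X x).IsHermitian) (hXinv : ∀ x : ℝ, IsUnit (X x))
    (γs : ℝ → Matrix (Fin p) (Fin p) ℂ)
    (hγs : ∀ x : ℝ, γs x = γ + σ₂ * (B x)ᴴ * (X x)⁻¹ * B x * σ₁
        - σ₁ * (B x)ᴴ * (X x)⁻¹ * B x * σ₂) :
    ∀ x : ℝ, HasDerivAt (fun y => (X y)⁻¹ * B y * σ₁)
      (Aᴴ * (X x)⁻¹ * B x * σ₂ - (X x)⁻¹ * B x * γs x) x :=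
  stmt3_general σ₁ σ₂ γ A B X hB hX hLyap hXinv γs hγs
end

section
/- Gelfand–Levitan equation from vessel structure: let f : ℝ≥0 × ℝ≥0 → ℂ and suppose there exist a Hilbert space H, a continuous family B : ℝ≥0 → (ℂ² → H), and invertible self-adjoint operators X(x) with X(0) = I, such that f(x,y) = e₁* B(x)* B(y) e₁ (where e₁ = (1,0)ᵀ) and X(x) = I + ∫₀ˣ B(t) σ₂ B(t)* dt with σ₂ = [[1,0],[0,0]]. Define K(x,y) = − e₁* B(x)* X(x)⁻¹ B(y) e₁. Then the Gelfand–Levitan equation f(x,y) + K(x,y) + ∫₀ˣ K(x,t) f(t,y) dt = 0 holds for all 0 ≤ y ≤ x. -/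
/-!
Write `g t = B t e₁` and `T t = g t ⟪g t, ·⟫`, so that `X x = 1 + ∫₀ˣ T`. Pulling the bounded
functional `⟪g x, X(x)⁻¹ ·⟫` through the Bochner integral gives
`∫₀ˣ K(x,t) f(t,y) dt = -⟪g x, X(x)⁻¹ (X x - 1) g y⟫ = -f(x,y) - K(x,y)`.
-/

open MeasureTheory

section RankOne

variable {H : Type*} [NormedAddCommGroup H] [InnerProductSpace ℂ H]

theorem continuous_innerSL_smulRight {α : Type*} [TopologicalSpace α] {g : α → H}
    (hg : Continuous g) : Continuous fun t => (innerSL ℂ (g t)).smulRight (g t) :=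
  ((ContinuousLinearMap.smulRightL ℂ H H).continuous.comp
    ((innerSL ℂ).continuous.comp hg)).clm_apply hg

theorem intervalIntegral_innerSL_smulRight_apply {g : ℝ → H} (hg : Continuous g)
    (a b : ℝ) (v : H) :
    (∫ t in a..b, (innerSL ℂ (g t)).smulRight (g t)) v = ∫ t in a..b, inner ℂ (g t) v • g t :=
  ContinuousLinearMap.intervalIntegral_apply
    ((continuous_innerSL_smulRight hg).intervalIntegrable a b) v

theorem intervalIntegral_inner_mul_inner [CompleteSpace H] {g : ℝ → H} (hg : Continuous g)
    (A : H →L[ℂ] H) (a b : ℝ) (u v : H) :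
    ∫ t in a..b, inner ℂ u (A (g t)) * inner ℂ (g t) v =
      inner ℂ u (A ((∫ t in a..b, (innerSL ℂ (g t)).smulRight (g t)) v)) := by
  have hint : Continuous fun t => inner ℂ (g t) v • g t := (hg.inner continuous_const).smul hg
  calc ∫ t in a..b, inner ℂ u (A (g t)) * inner ℂ (g t) v
      = ∫ t in a..b, (innerSL ℂ u).comp A (inner ℂ (g t) v • g t) := by
        simp only [ContinuousLinearMap.comp_apply, innerSL_apply_apply, map_smul, smul_eq_mul,
          mul_comm]
    _ = (innerSL ℂ u).comp A (∫ t in a..b, inner ℂ (g t) v • g t) :=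
        ((innerSL ℂ u).comp A).intervalIntegral_comp_comm (hint.intervalIntegrable a b)
    _ = _ := by rw [intervalIntegral_innerSL_smulRight_apply hg]; rfl

end RankOne

theorem stmt12_general {H : Type*} [NormedAddCommGroup H] [InnerProductSpace ℂ H]
    [CompleteSpace H]
    (B : ℝ → (EuclideanSpace ℂ (Fin 2) →L[ℂ] H)) (hB : Continuous B)
    (e₁ : EuclideanSpace ℂ (Fin 2))
    (X Xinv : ℝ → (H →L[ℂ] H))
    (hX : ∀ x : ℝ, X x = 1 + ∫ t in (0:ℝ)..x,
        (innerSL ℂ (B t e₁)).smulRight (B t e₁))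
    (hXinv : ∀ x : ℝ, X x * Xinv x = 1 ∧ Xinv x * X x = 1)
    (f K : ℝ → ℝ → ℂ)
    (hf : ∀ x y : ℝ, f x y = inner ℂ (B x e₁) (B y e₁))
    (hK : ∀ x y : ℝ, K x y = -inner ℂ (B x e₁) (Xinv x (B y e₁))) :
    ∀ x y : ℝ, 0 ≤ y → y ≤ x →
      f x y + K x y + ∫ t in (0:ℝ)..x, K x t * f t y = 0 := by
  intro x y _ _
  set g : ℝ → H := fun t => B t e₁
  set T : H →L[ℂ] H := ∫ t in (0:ℝ)..x, (innerSL ℂ (g t)).smulRight (g t)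
  have hg : Continuous g := hB.clm_apply continuous_const
  have hXinv_T : Xinv x (T (g y)) = g y - Xinv x (g y) := by
    have hleft : Xinv x (X x (g y)) = g y := by
      rw [← mul_apply_eq_comp, (hXinv x).2, one_apply_eq_self]
    rw [hX x, add_apply, one_apply_eq_self, map_add] at hleft
    exact eq_sub_of_add_eq' hleft
  have hintegrand : ∀ t, K x t * f t y = -(inner ℂ (g x) (Xinv x (g t)) * inner ℂ (g t) (g y)) :=
    fun t => by rw [hK, hf, neg_mul]
  simp_rw [hintegrand, intervalIntegral.integral_neg, intervalIntegral_inner_mul_inner hg]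
  rw [hXinv_T, inner_sub_right, hf, hK]
  ring

/-- Gelfand–Levitan equation from the vessel structure: with
`f(x,y) = ⟪B(x)e₁, B(y)e₁⟫`, `X(x) = I + ∫₀ˣ (B(t)e₁)(B(t)e₁)* dt` invertible, and
`K(x,y) = −⟪B(x)e₁, X(x)⁻¹ B(y)e₁⟫`, one has
`f(x,y) + K(x,y) + ∫₀ˣ K(x,t) f(t,y) dt = 0` for `0 ≤ y ≤ x`. -/
theorem stmt12 {H : Type*} [NormedAddCommGroup H] [InnerProductSpace ℂ H]
    [CompleteSpace H]
    (B : ℝ → (EuclideanSpace ℂ (Fin 2) →L[ℂ] H)) (hB : Continuous B)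
    (e₁ : EuclideanSpace ℂ (Fin 2)) (he₁ : e₁ = EuclideanSpace.single 0 1)
    (X Xinv : ℝ → (H →L[ℂ] H))
    (hX : ∀ x : ℝ, X x = 1 + ∫ t in (0:ℝ)..x,
        (innerSL ℂ (B t e₁)).smulRight (B t e₁))
    (hXinv : ∀ x : ℝ, X x * Xinv x = 1 ∧ Xinv x * X x = 1)
    (f K : ℝ → ℝ → ℂ)
    (hf : ∀ x y : ℝ, f x y = inner ℂ (B x e₁) (B y e₁))
    (hK : ∀ x y : ℝ, K x y = -inner ℂ (B x e₁) (Xinv x (B y e₁))) :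
    ∀ x y : ℝ, 0 ≤ y → y ≤ x →
      f x y + K x y + ∫ t in (0:ℝ)..x, K x t * f t y = 0 :=
  stmt12_general B hB e₁ X Xinv hX hXinv f K hf hK
end

section
/- Inverse via the transformed kernel: let H = L²(ω) for a positive measure ω on ℝ, let φ(x,·) ∈ H be a family with φ(0,λ) = 1 and suppose Y(x) defined by (Y(x)g)(λ) = g(λ) − ∫₀ˣ φ(y,λ) (∫ φ(y,μ) g(μ) dω(μ)) dy and X(x) defined by (X(x)g)(λ) = g(λ) + ∫₀ˣ cos(√λ y) (∫ cos(√μ y) g(μ) dω(μ)) dy satisfy X(x) φ(x,·) = cos(√· x) and Y(x) cos(√· x) = φ(x,·) for all x ≥ 0. Then d/dx [X(x) Y(x)] = 0, and consequently X(x) Y(x) = I for all x ≥ 0, i.e., Y(x) = X(x)⁻¹. -/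
/-!
Differentiating, `(X Y)' = c c* Y - X φ φ*`. Since `Y` is self-adjoint with `Y c = φ`, the first
term is `g ↦ ⟪φ, g⟫ c`, and since `X φ = c`, so is the second. Hence `X Y` is constant on `[0, ∞)`,
equal to `X 0 * Y 0 = 1`.
-/

section RankOne

variable {H : Type*} [NormedAddCommGroup H] [InnerProductSpace ℂ H] [CompleteSpace H]

theorem innerSL_smulRight_mul_eq_mul_innerSL_smulRight {S T : H →L[ℂ] H} {u v : H}
    (hT : IsSelfAdjoint T) (hTu : T u = v) (hSv : S v = u) :
    (innerSL ℂ u).smulRight u * T = S * (innerSL ℂ v).smulRight v := by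
  ext g
  have h_inner : inner ℂ u (T g) = inner ℂ v g := by
    rw [← hT.adjoint_eq, ContinuousLinearMap.adjoint_inner_right, hTu]
  simp [h_inner, hSv]

end RankOne

theorem stmt14_general {H : Type*} [NormedAddCommGroup H] [InnerProductSpace ℂ H]
    [CompleteSpace H]
    (c φ : ℝ → H)
    (X Y : ℝ → (H →L[ℂ] H))
    (hX0 : X 0 = 1) (hY0 : Y 0 = 1)
    (hXd : ∀ x : ℝ, HasDerivAt X ((innerSL ℂ (c x)).smulRight (c x)) x)
    (hYd : ∀ x : ℝ, HasDerivAt Y (-(innerSL ℂ (φ x)).smulRight (φ x)) x)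
    (hYsa : ∀ x : ℝ, IsSelfAdjoint (Y x))
    (hXφ : ∀ x : ℝ, 0 ≤ x → X x (φ x) = c x)
    (hYc : ∀ x : ℝ, 0 ≤ x → Y x (c x) = φ x) :
    ∀ x : ℝ, 0 ≤ x →
      HasDerivAt (fun s => X s * Y s) 0 x ∧ X x * Y x = 1 := by
  have h_deriv : ∀ x : ℝ, 0 ≤ x → HasDerivAt (fun s => X s * Y s) 0 x := by
    intro x hx
    have h_cancel := innerSL_smulRight_mul_eq_mul_innerSL_smulRight (hYsa x) (hYc x hx) (hXφ x hx)
    have h_prod := (hXd x).mul (hYd x)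
    rwa [mul_neg, h_cancel, add_neg_cancel] at h_prod
  have h_cont : Continuous fun s => X s * Y s :=
    continuous_iff_continuousAt.2 fun s => ((hXd s).mul (hYd s)).continuousAt
  intro x hx
  have h_const := constant_of_has_deriv_right_zero h_cont.continuousOn
    (fun s hs => (h_deriv s hs.1).hasDerivWithinAt) x ⟨hx, le_rfl⟩
  exact ⟨h_deriv x hx, by simpa [hX0, hY0] using h_const⟩

/-- `Y(x)` is the inverse of `X(x)`: if `dX/dx = c_x c_x*`, `dY/dx = −φ_x φ_x*`,
`X(0) = Y(0) = I`, `Y(x)` self-adjoint, `X(x) φ_x = c_x` and `Y(x) c_x = φ_x`, then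
`d/dx (X(x)Y(x)) = 0` and consequently `X(x) Y(x) = I` for all `x ≥ 0`. -/
theorem stmt14 {H : Type*} [NormedAddCommGroup H] [InnerProductSpace ℂ H]
    [CompleteSpace H]
    (c φ : ℝ → H) (hc : Continuous c) (hφ : Continuous φ)
    (X Y : ℝ → (H →L[ℂ] H))
    (hX0 : X 0 = 1) (hY0 : Y 0 = 1)
    (hXd : ∀ x : ℝ, HasDerivAt X ((innerSL ℂ (c x)).smulRight (c x)) x)
    (hYd : ∀ x : ℝ, HasDerivAt Y (-(innerSL ℂ (φ x)).smulRight (φ x)) x)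
    (hYsa : ∀ x : ℝ, IsSelfAdjoint (Y x))
    (hXφ : ∀ x : ℝ, 0 ≤ x → X x (φ x) = c x)
    (hYc : ∀ x : ℝ, 0 ≤ x → Y x (c x) = φ x) :
    ∀ x : ℝ, 0 ≤ x →
      HasDerivAt (fun s => X s * Y s) 0 x ∧ X x * Y x = 1 :=
  stmt14_general c φ X Y hX0 hY0 hXd hYd hYsa hXφ hYc
end
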